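/- arXiv:1903.11535 — 8 statements merged into one kernel-verified Lean document; each statement's English description precedes it below -/
import Mathlib

section
/- Suppose p < 0, β ≥ -1/p, and -1/(β*p) < y(t) ≤ 1 with w + β*p*y(t) + 1 > 0. Then f(y(t)) > y(t): the agent's opinion strictly increases, diverging away from p. -/
/-- If `p < 0`, `β ≥ -1/p`, and `-1/(β*p) < y ≤ 1` with positive denominator,
then `f y > y`: the agent's opinion strictly increases, diverging away from `p`. -/
theorem stmt_7 (w β p y : ℝ) (hw : 0 < w) (hβ : 0 < β)
    (hp : -1 ≤ p) (hp0 : p < 0) (hβp : β ≥ -1 / p)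
    (hy1 : -1 / (β * p) < y) (hy2 : y ≤ 1)
    (hden : w + β * p * y + 1 > 0)
    (f : ℝ → ℝ) (hf : ∀ z, f z = (w * z + β * p ^ 2 * z + p) / (w + β * p * z + 1)) :
    f y > y := by
  have hbp : β * p < 0 := mul_neg_of_pos_of_neg hβ hp0
  have hk : y * (β * p) < -1 := (div_lt_iff_of_neg hbp).mp hy1
  have hy0 : 0 < y := by nlinarith
  rw [hf, gt_iff_lt, lt_div_iff₀ hden]
  nlinarith [mul_pos_of_neg_of_neg (show p - y < 0 by nlinarith) (show β * p * y + 1 < 0 by nlinarith)]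
end

section
/- Suppose p < 0 and 0 < y(t) < -1/(β*p) (with -1/(β*p) ≤ 1). Then f(y(t)) < y(t): the agent's opinion strictly decreases toward p. -/
/-- If `p < 0` and `0 < y < -1/(β*p)` (with `-1/(β*p) ≤ 1`), then `f y < y`:
the agent's opinion strictly decreases toward `p`. -/
theorem stmt_8 (w β p y : ℝ) (hw : 0 < w) (hβ : 0 < β)
    (hp : -1 ≤ p) (hp0 : p < 0)
    (hthr : -1 / (β * p) ≤ 1)
    (hy1 : 0 < y) (hy2 : y < -1 / (β * p))
    (f : ℝ → ℝ) (hf : ∀ z, f z = (w * z + β * p ^ 2 * z + p) / (w + β * p * z + 1)) :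
    f y < y := by
  have hbp : β * p < 0 := mul_neg_of_pos_of_neg hβ hp0
  have h1 : β * p * y > -1 := by
    have := (lt_div_iff_of_neg hbp).mp hy2
    nlinarith
  have hD : 0 < w + β * p * y + 1 := by linarith
  rw [hf, div_lt_iff₀ hD]
  nlinarith [mul_pos (sub_pos.mpr (lt_of_lt_of_le hp0 (le_of_lt hy1) : p < y)) (by linarith : (0:ℝ) < β * p * y + 1)]
end

section
/- In the single-agent BEBA model with p ≤ 0 and β < -1/p (or p = 0), for every initial opinion y(0) ∈ [-1,1] the iterates y(t) converge to p. -/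
/-!
With `q = β p ∈ (-1, 0]`, the denominator of the update is at least `w + q + 1 > w` on `[-1, 1]`,
so the `sgn` branch never fires, and the update `f` satisfies `f z - p = w / (w + q z + 1) * (z - p)`.
The gain `w / (w + q z + 1)` lies in `[0, c]` with `c = w / (w + q + 1) < 1`, so `f z` lies between
`p` and `z` (hence stays in `[-1, 1]`) and the distance to `p` shrinks geometrically.
-/

open Set Filter Topology

theorem tendsto_of_dist_succ_le_mul {X : Type*} [PseudoMetricSpace X] {y : ℕ → X} {a : X} {c : ℝ}
    (hc₀ : 0 ≤ c) (hc₁ : c < 1) (h : ∀ t, dist (y (t + 1)) a ≤ c * dist (y t) a) :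
    Tendsto y atTop (𝓝 a) := by
  have hgeom : ∀ t, dist (y t) a ≤ dist (y 0) a * c ^ t := by
    intro t
    induction t with
    | zero => simp
    | succ t ih =>
      calc dist (y (t + 1)) a ≤ c * dist (y t) a := h t
        _ ≤ c * (dist (y 0) a * c ^ t) := by gcongr
        _ = dist (y 0) a * c ^ (t + 1) := by ring
  rw [tendsto_iff_dist_tendsto_zero]
  refine squeeze_zero (fun _ => dist_nonneg) hgeom ?_
  simpa using (tendsto_pow_atTop_nhds_zero_of_lt_one hc₀ hc₁).const_mul (dist (y 0) a)

namespace BEBA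

noncomputable def step (w β p z : ℝ) : ℝ :=
  (w * z + β * p ^ 2 * z + p) / (w + β * p * z + 1)

theorem step_sub (w β p z : ℝ) (h : w + β * p * z + 1 ≠ 0) :
    step w β p z - p = w / (w + β * p * z + 1) * (z - p) := by
  rw [step, div_mul_eq_mul_div, eq_div_iff h, sub_mul, div_mul_cancel₀ _ h]
  ring

variable {w β p z : ℝ}

theorem denom_le (hq : β * p ≤ 0) (hz : z ≤ 1) : w + β * p + 1 ≤ w + β * p * z + 1 := by
  nlinarith

theorem contraction_lt_one (hw : 0 < w) (hq₁ : -1 < β * p) : w / (w + β * p + 1) < 1 :=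
  (div_lt_one (by linarith)).2 (by linarith)

section

variable (hw : 0 < w) (hq₁ : -1 < β * p) (hq₀ : β * p ≤ 0)
include hw hq₁ hq₀

theorem denom_pos (hz : z ≤ 1) : 0 < w + β * p * z + 1 := by
  linarith [denom_le (w := w) hq₀ hz]

theorem gain_le (hz : z ≤ 1) : w / (w + β * p * z + 1) ≤ w / (w + β * p + 1) :=
  div_le_div_of_nonneg_left hw.le (by linarith) (denom_le hq₀ hz)

theorem step_mem_Icc (hp : p ∈ Icc (-1 : ℝ) 1) (hz : z ∈ Icc (-1 : ℝ) 1) :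
    step w β p z ∈ Icc (-1 : ℝ) 1 := by
  have hD := denom_pos hw hq₁ hq₀ hz.2
  have hgain : w / (w + β * p * z + 1) ∈ Icc (0 : ℝ) 1 :=
    ⟨div_nonneg hw.le hD.le,
      ((gain_le hw hq₁ hq₀ hz.2).trans (contraction_lt_one hw hq₁).le)⟩
  rw [← sub_add_cancel (step w β p z) p, step_sub w β p z hD.ne', add_comm, ← smul_eq_mul]
  exact (convex_Icc (-1 : ℝ) 1).add_smul_sub_mem hp hz hgain

theorem abs_step_sub_le (hz : z ≤ 1) :
    |step w β p z - p| ≤ w / (w + β * p + 1) * |z - p| := by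
  have hD := denom_pos hw hq₁ hq₀ hz
  rw [step_sub w β p z hD.ne', abs_mul, abs_of_nonneg (div_nonneg hw.le hD.le)]
  exact mul_le_mul_of_nonneg_right (gain_le hw hq₁ hq₀ hz) (abs_nonneg _)

end

end BEBA

open BEBA

/-- In the single-agent BEBA model with `p ≤ 0` and (`β < -1/p` or `p = 0`),
for every initial opinion `y 0 ∈ [-1, 1]` the iterates `y t` converge to `p`. -/
theorem stmt_10 (w β p : ℝ) (hw : 0 < w) (hβ : 0 < β)
    (hp : p ∈ Set.Icc (-1 : ℝ) 0)
    (hcase : β < -1 / p ∨ p = 0)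
    (y : ℕ → ℝ) (h0 : y 0 ∈ Set.Icc (-1 : ℝ) 1)
    (hupd : ∀ t, y (t + 1) =
      if w + β * p * y t + 1 ≤ 0 then Real.sign (y t)
      else (w * y t + β * p ^ 2 * y t + p) / (w + β * p * y t + 1)) :
    Filter.Tendsto y Filter.atTop (nhds p) := by
  have hq₀ : β * p ≤ 0 := mul_nonpos_of_nonneg_of_nonpos hβ.le hp.2
  have hq₁ : -1 < β * p := by
    rcases hp.2.lt_or_eq with hneg | rfl
    · exact (lt_div_iff_of_neg hneg).1 (hcase.resolve_right hneg.ne)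
    · simp
  have hstep : ∀ t, y t ≤ 1 → y (t + 1) = step w β p (y t) := fun t ht => by
    rw [hupd, if_neg (denom_pos hw hq₁ hq₀ ht).not_ge, step]
  have hmem : ∀ t, y t ∈ Icc (-1 : ℝ) 1 := fun t => by
    induction t with
    | zero => exact h0
    | succ t ih =>
      exact hstep t ih.2 ▸ step_mem_Icc hw hq₁ hq₀ ⟨hp.1, hp.2.trans zero_le_one⟩ ih
  refine tendsto_of_dist_succ_le_mul (div_nonneg hw.le (by linarith))
    (contraction_lt_one hw hq₁) fun t => ?_
  simpa only [Real.dist_eq, hstep t (hmem t).2] using abs_step_sub_le hw hq₁ hq₀ (hmem t).2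
end

section
/- In the single-agent BEBA model with p < 0 and β ≥ -1/p: if y(0) < -1/(β*p) then y(t) → p; if y(0) > -1/(β*p) then y(t) → 1; if y(0) = -1/(β*p) then y(t) = -1/(β*p) for all t. -/
/-!
Write `k = β p` and `c = -1/k`, so that `k c = -1` and the denominator of the update is
`w + k (x - c)`. Below `c` the update is `p + w (x - p) / (w + k (x - c))`, and on `[-1, m]` with
`m < c` the denominator exceeds `w + k (m - c) > w`: the orbit contracts geometrically towards `p`.
Above `c` the update exceeds `x` by `-k (x - p) (x - c) / (w + k (x - c)) ≥ -k (x - p) (x - c) / w`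
(or jumps to `1` once the denominator is non-positive), so the orbit gains a fixed amount at each
step until it is clipped at `1`. At `c` the update returns `c`.
-/

open Filter Topology Set

theorem tendsto_of_abs_sub_le_mul {u : ℕ → ℝ} {a q : ℝ} (hq₀ : 0 ≤ q) (hq₁ : q < 1)
    (h : ∀ n, |u (n + 1) - a| ≤ q * |u n - a|) : Tendsto u atTop (𝓝 a) := by
  have hgeom : ∀ n, |u n - a| ≤ q ^ n * |u 0 - a| := by
    intro n
    induction n with
    | zero => simp
    | succ n ih =>
      calc |u (n + 1) - a| ≤ q * |u n - a| := h n
        _ ≤ q * (q ^ n * |u 0 - a|) := mul_le_mul_of_nonneg_left ih hq₀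
        _ = q ^ (n + 1) * |u 0 - a| := by ring
  have hlim : Tendsto (fun n => q ^ n * |u 0 - a|) atTop (𝓝 0) := by
    simpa using (tendsto_pow_atTop_nhds_zero_of_lt_one hq₀ hq₁).mul_const |u 0 - a|
  rw [tendsto_iff_norm_sub_tendsto_zero]
  exact squeeze_zero (fun n => norm_nonneg _) hgeom hlim

theorem eventually_eq_of_min_add_le {u : ℕ → ℝ} {b δ : ℝ} (hδ : 0 < δ) (hle : ∀ n, u n ≤ b)
    (hstep : ∀ n, min b (u n + δ) ≤ u (n + 1)) : ∀ᶠ n in atTop, u n = b := by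
  have hlin : ∀ n : ℕ, u n < b → u 0 + n * δ ≤ u n := by
    intro n
    induction n with
    | zero => simp
    | succ n ih =>
      intro hlt
      rcases min_le_iff.1 (hstep n) with hb | hgain
      · exact absurd hlt (not_lt.2 hb)
      · have := ih (by linarith)
        push_cast
        linarith
  obtain ⟨N, hN⟩ := exists_nat_gt ((b - u 0) / δ)
  refine eventually_atTop.2 ⟨N, fun n hn => le_antisymm (hle n) (not_lt.1 fun hlt => ?_)⟩
  have hNn : (N : ℝ) ≤ n := by exact_mod_cast hn
  rw [div_lt_iff₀ hδ] at hN
  nlinarith [hlin n hlt]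

namespace Beba

/-! The parameter `k` stands for `β * p`, so that `β * p ^ 2 = k * p`. -/

def den (w k x : ℝ) : ℝ := w + k * x + 1

noncomputable def ratMap (w k p x : ℝ) : ℝ := (w * x + k * p * x + p) / den w k x

noncomputable def step (w k p x : ℝ) : ℝ :=
  max (-1) (min 1 (if den w k x ≤ 0 then Real.sign x else ratMap w k p x))

variable {w k p c m x : ℝ}

theorem den_eq (hkc : k * c = -1) : den w k x = w + k * (x - c) := by
  unfold den; linear_combination hkc

theorem ratMap_sub_p (hD : den w k x ≠ 0) : ratMap w k p x - p = w * (x - p) / den w k x := by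
  unfold ratMap
  field_simp
  unfold den
  ring

theorem ratMap_sub_self (hkc : k * c = -1) (hD : den w k x ≠ 0) :
    ratMap w k p x - x = -k * (x - p) * (x - c) / den w k x := by
  unfold ratMap
  field_simp
  unfold den
  linear_combination (p - x) * hkc

theorem step_eq_ratMap (hD : 0 < den w k x) (h₁ : -1 ≤ ratMap w k p x) (h₂ : ratMap w k p x ≤ 1) :
    step w k p x = ratMap w k p x := by
  rw [step, if_neg hD.not_ge, min_eq_right h₂, max_eq_right h₁]

theorem step_le_one : step w k p x ≤ 1 :=
  max_le (by norm_num) (min_le_left _ _)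

theorem step_eq_self_of_threshold (hw : 0 < w) (hkc : k * c = -1) (hc₀ : 0 < c) (hc₁ : c ≤ 1) :
    step w k p c = c := by
  have hD : den w k c = w := by rw [den_eq hkc, sub_self, mul_zero, add_zero]
  have hDpos : 0 < den w k c := by rw [hD]; exact hw
  have hfix : ratMap w k p c = c := by
    have := ratMap_sub_p (p := p) hDpos.ne'
    rw [hD, mul_div_cancel_left₀ _ hw.ne'] at this
    linarith
  rw [step_eq_ratMap hDpos (by linarith) (by linarith), hfix]

theorem step_mem_Icc_and_abs_sub_le (hw : 0 < w) (hk : k < 0) (hkc : k * c = -1)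
    (hp : p ∈ Icc (-1) m) (hmc : m < c) (hm₁ : m ≤ 1) (hx : x ∈ Icc (-1) m) :
    step w k p x ∈ Icc (-1) m ∧ |step w k p x - p| ≤ w / (w + k * (m - c)) * |x - p| := by
  have hgap : 0 < k * (m - c) := mul_pos_of_neg_of_neg hk (by linarith)
  have hDge : w + k * (m - c) ≤ den w k x := by
    rw [den_eq hkc]
    linarith [mul_le_mul_of_nonpos_left (by linarith [hx.2] : x - c ≤ m - c) hk.le]
  have hD : 0 < den w k x := by linarith
  set r := w / den w k x
  have hr₀ : 0 ≤ r := div_nonneg hw.le hD.le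
  have hr₁ : r ≤ 1 := (div_le_one hD).2 (by linarith)
  have hf : ratMap w k p x = p + r * (x - p) := by
    rw [← sub_eq_iff_eq_add', ratMap_sub_p hD.ne', mul_div_right_comm]
  have hfmem : ratMap w k p x ∈ Icc (-1) m := by
    rw [hf]
    exact (convex_Icc (-1) m).add_smul_sub_mem hp hx ⟨hr₀, hr₁⟩
  rw [step_eq_ratMap hD hfmem.1 (hfmem.2.trans hm₁)]
  refine ⟨hfmem, ?_⟩
  rw [hf, add_sub_cancel_left, abs_mul, abs_of_nonneg hr₀]
  gcongr
  exact div_le_div_of_nonneg_left hw.le (by linarith) hDge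

theorem tendsto_of_lt_threshold (hw : 0 < w) (hk : k < 0) (hkc : k * c = -1) (hp : -1 ≤ p)
    (hpc : p < c) (hc₁ : c ≤ 1) {y : ℕ → ℝ} (hy : ∀ t, y (t + 1) = step w k p (y t))
    (h0 : y 0 ∈ Ico (-1) c) : Tendsto y atTop (𝓝 p) := by
  set m := max (y 0) p
  have hmc : m < c := max_lt h0.2 hpc
  have hpm : p ∈ Icc (-1) m := ⟨hp, le_max_right _ _⟩
  have hgap : 0 < k * (m - c) := mul_pos_of_neg_of_neg hk (by linarith)
  have hstep := fun x (hx : x ∈ Icc (-1) m) =>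
    step_mem_Icc_and_abs_sub_le hw hk hkc hpm hmc (by linarith) hx
  have hmem : ∀ t, y t ∈ Icc (-1) m := by
    intro t
    induction t with
    | zero => exact ⟨h0.1, le_max_left _ _⟩
    | succ t ih =>
      rw [hy t]
      exact (hstep _ ih).1
  refine tendsto_of_abs_sub_le_mul (q := w / (w + k * (m - c))) (div_nonneg hw.le (by linarith))
    ((div_lt_one (by linarith)).2 (by linarith)) fun t => ?_
  rw [hy t]
  exact (hstep _ (hmem t)).2

theorem min_add_le_step (hw : 0 < w) (hk : k < 0) (hkc : k * c = -1) (hpc : p < c)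
    {x₀ : ℝ} (hcx₀ : c < x₀) (hx : x₀ ≤ x) :
    min 1 (x + -k * (x₀ - p) * (x₀ - c) / w) ≤ step w k p x := by
  have hc₀ : 0 < c := pos_of_mul_neg_right (by rw [hkc]; norm_num) hk.le
  by_cases hD : den w k x ≤ 0
  · rw [step, if_pos hD, Real.sign_of_pos (by linarith)]
    norm_num
  rw [not_le] at hD
  have hDle : den w k x ≤ w := by
    rw [den_eq hkc]
    linarith [mul_nonpos_of_nonpos_of_nonneg hk.le (by linarith : 0 ≤ x - c)]
  have hk' : 0 ≤ -k := by linarith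
  have hxp : 0 ≤ -k * (x - p) := mul_nonneg hk' (by linarith)
  have hgain : -k * (x₀ - p) * (x₀ - c) / w ≤ ratMap w k p x - x := by
    rw [ratMap_sub_self hkc hD.ne']
    calc -k * (x₀ - p) * (x₀ - c) / w ≤ -k * (x - p) * (x - c) / w := by gcongr
      _ ≤ -k * (x - p) * (x - c) / den w k x :=
          div_le_div_of_nonneg_left (mul_nonneg hxp (by linarith)) hD hDle
  calc min 1 (x + -k * (x₀ - p) * (x₀ - c) / w) ≤ min 1 (ratMap w k p x) :=
        min_le_min_left _ (by linarith)
    _ ≤ step w k p x := by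
        rw [step, if_neg hD.not_ge]
        exact le_max_right _ _

theorem eventually_eq_one_of_threshold_lt (hw : 0 < w) (hk : k < 0) (hkc : k * c = -1)
    (hpc : p < c) {y : ℕ → ℝ} (hy : ∀ t, y (t + 1) = step w k p (y t))
    (h0 : y 0 ∈ Ioc c 1) : ∀ᶠ t in atTop, y t = 1 := by
  set δ := -k * (y 0 - p) * (y 0 - c) / w
  have hδ : 0 < δ :=
    div_pos (mul_pos (mul_pos (neg_pos.2 hk) (by linarith [h0.1])) (by linarith [h0.1])) hw
  have hle : ∀ t, y t ≤ 1 := by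
    rintro (_ | t)
    · exact h0.2
    · rw [hy t]
      exact step_le_one
  have hmono : ∀ t, y 0 ≤ y t := by
    intro t
    induction t with
    | zero => exact le_rfl
    | succ t ih =>
      rw [hy t]
      exact le_trans (le_min h0.2 (by linarith)) (min_add_le_step hw hk hkc hpc h0.1 ih)
  refine eventually_eq_of_min_add_le hδ hle fun t => ?_
  rw [hy t]
  exact min_add_le_step hw hk hkc hpc h0.1 (hmono t)

end Beba

theorem stmt_11_general (w β p : ℝ) (hw : 0 < w)
    (hp : -1 ≤ p) (hp0 : p < 0) (hβp : β ≥ -1 / p)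
    (y : ℕ → ℝ) (h0 : y 0 ∈ Set.Icc (-1 : ℝ) 1)
    (hupd : ∀ t, y (t + 1) =
      max (-1) (min 1
        (if w + β * p * y t + 1 ≤ 0 then Real.sign (y t)
         else (w * y t + β * p ^ 2 * y t + p) / (w + β * p * y t + 1)))) :
    (y 0 < -1 / (β * p) → Filter.Tendsto y Filter.atTop (nhds p)) ∧
    (y 0 > -1 / (β * p) → Filter.Tendsto y Filter.atTop (nhds 1)) ∧
    (y 0 = -1 / (β * p) → ∀ t, y t = -1 / (β * p)) := by
  have hk : β * p ≤ -1 := (div_le_iff_of_neg hp0).1 hβp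
  set c := -1 / (β * p)
  have hkc : β * p * c = -1 := mul_div_cancel₀ _ (by linarith)
  have hc₀ : 0 < c := div_pos_of_neg_of_neg (by norm_num) (by linarith)
  have hc₁ : c ≤ 1 := (div_le_one_of_neg (by linarith)).2 hk
  have hy : ∀ t, y (t + 1) = Beba.step w (β * p) p (y t) := fun t => by
    rw [hupd t, show β * p ^ 2 = β * p * p by ring]
    rfl
  refine ⟨fun hlt => ?_, fun hgt => ?_, fun hc t => ?_⟩
  · exact Beba.tendsto_of_lt_threshold hw (by linarith) hkc hp (hp0.trans hc₀) hc₁ hy ⟨h0.1, hlt⟩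
  · refine tendsto_const_nhds.congr' ?_
    filter_upwards [Beba.eventually_eq_one_of_threshold_lt hw (by linarith) hkc (hp0.trans hc₀) hy
      ⟨hgt, h0.2⟩] with t ht using ht.symm
  · induction t with
    | zero => exact hc
    | succ t ih => rw [hy t, ih, Beba.step_eq_self_of_threshold hw hkc hc₀ hc₁]

/-- Single-agent BEBA with `p < 0` and `β ≥ -1/p` (update clipped to `[-1,1]`):
if `y 0 < -1/(β*p)` then `y t → p`; if `y 0 > -1/(β*p)` then `y t → 1`;
if `y 0 = -1/(β*p)` then `y t = -1/(β*p)` for all `t`. -/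
theorem stmt_11 (w β p : ℝ) (hw : 0 < w) (hβ : 0 < β)
    (hp : -1 ≤ p) (hp0 : p < 0) (hβp : β ≥ -1 / p)
    (y : ℕ → ℝ) (h0 : y 0 ∈ Set.Icc (-1 : ℝ) 1)
    (hupd : ∀ t, y (t + 1) =
      max (-1) (min 1
        (if w + β * p * y t + 1 ≤ 0 then Real.sign (y t)
         else (w * y t + β * p ^ 2 * y t + p) / (w + β * p * y t + 1)))) :
    (y 0 < -1 / (β * p) → Filter.Tendsto y Filter.atTop (nhds p)) ∧
    (y 0 > -1 / (β * p) → Filter.Tendsto y Filter.atTop (nhds 1)) ∧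
    (y 0 = -1 / (β * p) → ∀ t, y t = -1 / (β * p)) :=
  stmt_11_general w β p hw hp hp0 hβp y h0 hupd
end

section
/- At the fixed point y^a = (β*q - m + √Δ)/(2*β*s) (with Δ = (β*q - m)^2 + 4*β*s^2), the derivative of g satisfies 0 < g'(y^a) < 1; i.e., y^a is an attracting fixed point. -/
/-- At the fixed point `yᵃ = (β*q - m + √Δ)/(2*β*s)` (with
`Δ = (β*q - m)^2 + 4*β*s^2`), the derivative of `g` satisfies `0 < g'(yᵃ) < 1`:
`yᵃ` is an attracting fixed point. -/
theorem stmt_15 (w β : ℝ) (hw : 0 < w) (hβ : 0 < β)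
    (m : ℕ) (hm : 1 ≤ m) (p : Fin m → ℝ) (hp : ∀ j, p j ∈ Set.Icc (-1 : ℝ) 1)
    (s q : ℝ) (hs : s = ∑ j, p j) (hq : q = ∑ j, p j ^ 2)
    (hs0 : s ≠ 0) (hq0 : 0 < q) (hcs : (m : ℝ) * q ≥ s ^ 2)
    (g : ℝ → ℝ) (hg : ∀ y, g y = (w * y + β * q * y + s) / (w + β * s * y + m))
    (Δ ya : ℝ) (hΔ : Δ = (β * q - m) ^ 2 + 4 * β * s ^ 2)
    (hya : ya = (β * q - m + Real.sqrt Δ) / (2 * β * s)) :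
    0 < deriv g ya ∧ deriv g ya < 1 := by
  have hm1 : (1:ℝ) ≤ (m:ℝ) := by exact_mod_cast hm
  have hs2 : 0 < s ^ 2 := by positivity
  have hΔpos : 0 < Δ := by rw [hΔ]; positivity
  set r := Real.sqrt Δ with hrdef
  have hr : r ^ 2 = Δ := Real.sq_sqrt hΔpos.le
  have hr0 : 0 ≤ r := Real.sqrt_nonneg _
  have hya' : β * s * ya = (β * q - m + r) / 2 := by
    rw [hya]; field_simp
  have hD : 0 < w + β * s * ya + m := by
    rw [hya']
    nlinarith [mul_pos hβ hq0]
  have hgfun : g = fun y => (w * y + β * q * y + s) / (w + β * s * y + m) :=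
    funext hg
  have h1 : HasDerivAt (fun y : ℝ => w * y + β * q * y + s) (w + β * q) ya := by
    simpa using (((hasDerivAt_id ya).const_mul w).add
      ((hasDerivAt_id ya).const_mul (β * q))).add_const s
  have h2 : HasDerivAt (fun y : ℝ => w + β * s * y + m) (β * s) ya := by
    simpa using (((hasDerivAt_id ya).const_mul (β * s)).const_add w).add_const (m:ℝ)
  have hd := h1.div h2 (ne_of_gt hD)
  have hderiv : deriv g ya =
      ((w + β * q) * (w + β * s * ya + m) - (w * ya + β * q * ya + s) * (β * s)) /
        (w + β * s * ya + m) ^ 2 := by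
    rw [hgfun]; exact hd.deriv
  have hnum : (w + β * q) * (w + β * s * ya + m) - (w * ya + β * q * ya + s) * (β * s)
      = (w + β * q) * (w + m) - β * s ^ 2 := by ring
  rw [hderiv, hnum]
  have hN : 0 < (w + β * q) * (w + m) - β * s ^ 2 := by
    nlinarith [mul_pos hβ hq0, mul_le_mul_of_nonneg_left hcs hβ.le]
  have hD2 : 0 < (w + β * s * ya + m) ^ 2 := by positivity
  constructor
  · positivity
  · rw [div_lt_one hD2]
    have : (w + β * s * ya + m) ^ 2 - ((w + β * q) * (w + m) - β * s ^ 2)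
        = (β * q - m) ^ 2 / 2 + (w + (β * q + m) / 2) * r + 2 * (β * s ^ 2) := by
      have hrΔ : r ^ 2 = (β * q - m) ^ 2 + 4 * β * s ^ 2 := hr.trans hΔ
      rw [hya']
      linear_combination hrΔ / 4
    have h3 : 0 ≤ (w + (β * q + m) / 2) * r :=
      mul_nonneg (by nlinarith [mul_pos hβ hq0]) hr0
    have h4 : 0 < β * s ^ 2 := mul_pos hβ hs2
    have hA : 0 < (β * q - m) ^ 2 / 2 + (w + (β * q + m) / 2) * r + 2 * (β * s ^ 2) := by
      have := sq_nonneg (β * q - m); linarith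
    linarith [this, hA]
end

section
/- At the fixed point y^r = (β*q - m - √Δ)/(2*β*s), the derivative of g satisfies g'(y^r) > 1; i.e., y^r is a repelling fixed point. -/
/-- At the fixed point `yʳ = (β*q - m - √Δ)/(2*β*s)`, the derivative of `g`
satisfies `g'(yʳ) > 1`: `yʳ` is a repelling fixed point. -/
theorem stmt_16 (w β : ℝ) (hw : 0 < w) (hβ : 0 < β)
    (m : ℕ) (hm : 1 ≤ m) (p : Fin m → ℝ) (hp : ∀ j, p j ∈ Set.Icc (-1 : ℝ) 1)
    (s q : ℝ) (hs : s = ∑ j, p j) (hq : q = ∑ j, p j ^ 2)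
    (hs0 : s ≠ 0) (hq0 : 0 < q)
    (hkey : (m : ℝ) * q > s ^ 2 ∨ w * (m + w + β * q) > β * (s ^ 2 - q * m))
    (g : ℝ → ℝ) (hg : ∀ y, g y = (w * y + β * q * y + s) / (w + β * s * y + m))
    (Δ yr : ℝ) (hΔ : Δ = (β * q - m) ^ 2 + 4 * β * s ^ 2)
    (hyr : yr = (β * q - m - Real.sqrt Δ) / (2 * β * s)) :
    deriv g yr > 1 := by
  have hm1 : (1:ℝ) ≤ m := by exact_mod_cast hm
  have hK : w * (w + m + β * q) + β * (q * m - s ^ 2) > 0 := by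
    rcases hkey with h | h
    · have h1 : 0 < w * (w + (m:ℝ) + β * q) := by positivity
      have h2 : 0 < β * (q * m - s ^ 2) := by nlinarith
      linarith
    · nlinarith
  have hs2 : 0 < s ^ 2 := by positivity
  have hΔpos : 0 < Δ := by nlinarith [sq_nonneg (β * q - m)]
  have hsqΔ : Real.sqrt Δ ^ 2 = Δ := Real.sq_sqrt hΔpos.le
  have hsqΔpos : 0 < Real.sqrt Δ := Real.sqrt_pos.mpr hΔpos
  set T := 2*w + (m:ℝ) + β*q with hT
  have hTpos : 0 < T := by positivity
  have hΔltT : Real.sqrt Δ < T := by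
    rw [show T = Real.sqrt (T^2) from (Real.sqrt_sq hTpos.le).symm]
    apply Real.sqrt_lt_sqrt hΔpos.le
    nlinarith
  have hbs : β * s ≠ 0 := by positivity
  have hD : w + β * s * yr + m = (T - Real.sqrt Δ) / 2 := by
    rw [hyr]; field_simp; ring
  have hDpos : 0 < w + β * s * yr + m := by rw [hD]; linarith
  have hgfun : g = fun y => (w * y + β * q * y + s) / (w + β * s * y + m) :=
    funext hg
  have hderiv : HasDerivAt g
      (((w + β*q) * (w + β * s * yr + m) - (w * yr + β * q * yr + s) * (β * s))
        / (w + β * s * yr + m)^2) yr := by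
    rw [hgfun]
    have h1 : HasDerivAt (fun y : ℝ => w * y + β * q * y + s) (w + β*q) yr := by
      have := ((hasDerivAt_id yr).const_mul w).add ((hasDerivAt_id yr).const_mul (β*q))
      simpa using this.add_const s
    have h2 : HasDerivAt (fun y : ℝ => w + β * s * y + m) (β*s) yr := by
      have := (hasDerivAt_id yr).const_mul (β*s)
      simpa using (this.const_add w).add_const (m:ℝ)
    exact h1.div h2 hDpos.ne'
  rw [hderiv.deriv, gt_iff_lt, lt_div_iff₀ (by positivity)]
  have hnum : (w + β*q) * (w + β * s * yr + m) - (w * yr + β * q * yr + s) * (β * s)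
      = (w + β*q) * (w + m) - β * s^2 := by ring
  rw [hnum, hD]
  nlinarith [mul_pos hsqΔpos (sub_pos.mpr hΔltT), hsqΔ]
end

section
/- In the BEBA model on a connected graph with two initial opinion values y_0 > 0 and -y_0, self-weight w_ii = 1, and entrenchment β = 1/y_0^2, every node's opinion is constant in time: y_i(t) = y_i(0) for all t ≥ 0 (persistent disagreement). -/
/-! With `β = 1 / y₀²` the weight `β yᵢ yⱼ + 1` between opposite opinions `±y₀` vanishes, so
every neighbour that contributes to the weighted average holds the same opinion as `i`: the
update returns `yᵢ(t)`, and by induction the opinions `±y₀` persist forever. -/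

lemma add_sum_mul_div_one_add_sum_eq {ι : Type*} (s : Finset ι) (w z : ι → ℝ) (x : ℝ)
    (hw : ∀ j ∈ s, 0 ≤ w j) (hz : ∀ j ∈ s, w j * z j = w j * x) :
    (x + ∑ j ∈ s, w j * z j) / (1 + ∑ j ∈ s, w j) = x := by
  have hpos : 0 < 1 + ∑ j ∈ s, w j := by linarith [Finset.sum_nonneg hw]
  rw [Finset.sum_congr rfl hz, ← Finset.sum_mul, div_eq_iff hpos.ne']
  ring

section TwoValued

variable {a b c : ℝ}

lemma two_valued_weight_mul_eq (ha : a = c ∨ a = -c) (hb : b = c ∨ b = -c) :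
    (1 / c ^ 2 * a * b + 1) * b = (1 / c ^ 2 * a * b + 1) * a := by
  rcases eq_or_ne c 0 with rfl | hc
  · simp_all
  rcases ha with rfl | rfl <;> rcases hb with rfl | rfl <;> field_simp <;> ring

lemma two_valued_weight_nonneg (ha : a = c ∨ a = -c) (hb : b = c ∨ b = -c) :
    0 ≤ 1 / c ^ 2 * a * b + 1 := by
  rcases eq_or_ne c 0 with rfl | hc
  · simp_all
  rcases ha with rfl | rfl <;> rcases hb with rfl | rfl <;> field_simp <;> norm_num

end TwoValued

theorem stmt_17_general {V : Type*} [Fintype V] (G : SimpleGraph V) [DecidableRel G.Adj]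
    (y0 : ℝ)
    (β : ℝ) (hβ : β = 1 / y0 ^ 2)
    (y : ℕ → V → ℝ)
    (hinit : ∀ i, y 0 i = y0 ∨ y 0 i = -y0)
    (hupd : ∀ t i, y (t + 1) i =
      (y t i + ∑ j ∈ G.neighborFinset i, (β * y t i * y t j + 1) * y t j) /
      (1 + ∑ j ∈ G.neighborFinset i, (β * y t i * y t j + 1))) :
    ∀ t i, y t i = y 0 i := by
  subst hβ
  intro t
  induction t with
  | zero => exact fun _ => rfl
  | succ t ih =>
    intro i
    have hval : ∀ j, y t j = y0 ∨ y t j = -y0 := fun j => ih j ▸ hinit j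
    rw [hupd, add_sum_mul_div_one_add_sum_eq _ _ _ _
      (fun j _ => two_valued_weight_nonneg (hval i) (hval j))
      (fun j _ => two_valued_weight_mul_eq (hval i) (hval j)), ih]

/-- BEBA on a connected graph with two initial opinion values `y₀ > 0` and
`-y₀`, self-weight `w_ii = 1`, and entrenchment `β = 1/y₀^2`: every node's
opinion is constant in time (persistent disagreement). -/
theorem stmt_17 {V : Type*} [Fintype V] (G : SimpleGraph V) [DecidableRel G.Adj]
    (hconn : G.Connected)
    (y0 : ℝ) (hy0 : 0 < y0) (hy0' : y0 < 1)
    (β : ℝ) (hβ : β = 1 / y0 ^ 2)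
    (y : ℕ → V → ℝ)
    (hinit : ∀ i, y 0 i = y0 ∨ y 0 i = -y0)
    (hupd : ∀ t i, y (t + 1) i =
      (y t i + ∑ j ∈ G.neighborFinset i, (β * y t i * y t j + 1) * y t j) /
      (1 + ∑ j ∈ G.neighborFinset i, (β * y t i * y t j + 1))) :
    ∀ t i, y t i = y 0 i :=
  stmt_17_general G y0 β hβ y hinit hupd
end

section
/- In the BEBA model with w_ii = 1 and β < 1/[max_i |y_i(t)|]^2 on a connected graph, if node i achieves the maximum absolute opinion at time t, then |y_i(t+1)| ≤ |y_i(t)|, with strict inequality if i has at least one neighbor with strictly smaller absolute opinion or any opposite-sign neighbor: the most opinionated node gets (weakly) moderated. -/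
/-!
The updated opinion is a weighted average of `y i` and of the neighbours' opinions, with
weight `1` on `y i` and weights `β y_i y_j + 1`, which are positive because
`|β y_i y_j| ≤ β y_i² < 1`. A weighted average with positive weights of numbers of absolute
value at most `|y i|` has absolute value at most `|y i|`. It is strictly smaller as soon as one
term either has smaller absolute value or has the sign opposite to `y i`, since then the
triangle inequality for that term is strict.
-/

open Finset

section WeightedAverage

variable {ι : Type*} {s : Finset ι} {w x : ι → ℝ} {a M : ℝ}

theorem abs_add_sum_mul_le (hw : ∀ j ∈ s, 0 ≤ w j) (hx : ∀ j ∈ s, |x j| ≤ M) :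
    |a + ∑ j ∈ s, w j * x j| ≤ |a| + (∑ j ∈ s, w j) * M :=
  calc |a + ∑ j ∈ s, w j * x j|
      ≤ |a| + ∑ j ∈ s, |w j * x j| :=
        (abs_add_le _ _).trans (by gcongr; exact abs_sum_le_sum_abs _ _)
    _ ≤ |a| + ∑ j ∈ s, w j * M := by
        gcongr with j hj
        rw [abs_mul, abs_of_nonneg (hw j hj)]
        exact mul_le_mul_of_nonneg_left (hx j hj) (hw j hj)
    _ = |a| + (∑ j ∈ s, w j) * M := by rw [sum_mul]

theorem abs_add_sum_mul_lt (hw : ∀ j ∈ s, 0 ≤ w j) (hx : ∀ j ∈ s, |x j| ≤ M) {j : ι}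
    (hj : j ∈ s) (hlt : |a + w j * x j| < |a| + w j * M) :
    |a + ∑ k ∈ s, w k * x k| < |a| + (∑ k ∈ s, w k) * M := by
  classical
  have hrest := abs_add_sum_mul_le (s := s.erase j) (a := a + w j * x j)
    (fun k hk => hw k (mem_of_mem_erase hk)) fun k hk => hx k (mem_of_mem_erase hk)
  rw [← add_sum_erase s _ hj, ← add_sum_erase s _ hj, ← add_assoc]
  linarith

theorem abs_add_mul_lt_of_mul_neg {w x : ℝ} (hw : 0 < w) (hax : a * x < 0) (hx : |x| ≤ M) :
    |a + w * x| < |a| + w * M := by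
  have hstrict : |a + w * x| < |a| + |w * x| := by
    refine (abs_add_le _ _).lt_of_ne fun he => ?_
    rcases (abs_add_eq_add_abs_iff _ _).1 he with ⟨ha, hwx⟩ | ⟨ha, hwx⟩ <;> nlinarith
  rw [abs_mul, abs_of_pos hw] at hstrict
  nlinarith

theorem abs_add_mul_lt_of_abs_lt {w x : ℝ} (hw : 0 < w) (hx : |x| < M) :
    |a + w * x| < |a| + w * M :=
  calc |a + w * x| ≤ |a| + |w * x| := abs_add_le _ _
    _ = |a| + w * |x| := by rw [abs_mul, abs_of_pos hw]
    _ < |a| + w * M := by gcongr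

theorem abs_weightedAverage_le (hw : ∀ j ∈ s, 0 ≤ w j) (hx : ∀ j ∈ s, |x j| ≤ |a|) :
    |(a + ∑ j ∈ s, w j * x j) / (1 + ∑ j ∈ s, w j)| ≤ |a| := by
  have hD : 0 < 1 + ∑ j ∈ s, w j := by linarith [sum_nonneg hw]
  rw [abs_div, abs_of_pos hD, div_le_iff₀ hD]
  linarith [abs_add_sum_mul_le (a := a) hw hx]

theorem abs_weightedAverage_lt (hw : ∀ j ∈ s, 0 ≤ w j) (hx : ∀ j ∈ s, |x j| ≤ |a|) {j : ι}
    (hj : j ∈ s) (hlt : |a + w j * x j| < |a| + w j * |a|) :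
    |(a + ∑ k ∈ s, w k * x k) / (1 + ∑ k ∈ s, w k)| < |a| := by
  have hD : 0 < 1 + ∑ k ∈ s, w k := by linarith [sum_nonneg hw]
  rw [abs_div, abs_of_pos hD, div_lt_iff₀ hD]
  linarith [abs_add_sum_mul_lt hw hx hj hlt]

end WeightedAverage

theorem mul_mul_add_one_pos {β a b : ℝ} (hβ0 : 0 ≤ β) (hβ : β < 1 / a ^ 2)
    (hab : |b| ≤ |a|) : 0 < β * a * b + 1 := by
  have hβa : β * a ^ 2 < 1 := by
    rcases eq_or_ne a 0 with rfl | ha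
    · simp
    · rwa [lt_div_iff₀ (by positivity)] at hβ
  have hab' : |a * b| ≤ a ^ 2 := by
    rw [abs_mul, ← sq_abs a, sq]
    exact mul_le_mul_of_nonneg_left hab (abs_nonneg a)
  nlinarith [neg_abs_le (a * b)]

theorem stmt_19_general {V : Type*} [Fintype V] (G : SimpleGraph V) [DecidableRel G.Adj]
    (β : ℝ) (hβ0 : 0 < β)
    (y : V → ℝ)
    (hβ : ∀ j, β < 1 / (y j) ^ 2)
    (i : V) (hmax : ∀ j, |y j| ≤ |y i|) :
    |(y i + ∑ j ∈ G.neighborFinset i, (β * y i * y j + 1) * y j) /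
      (1 + ∑ j ∈ G.neighborFinset i, (β * y i * y j + 1))| ≤ |y i| ∧
    ((∃ j ∈ G.neighborFinset i, |y j| < |y i| ∨ y i * y j < 0) →
      |(y i + ∑ j ∈ G.neighborFinset i, (β * y i * y j + 1) * y j) /
        (1 + ∑ j ∈ G.neighborFinset i, (β * y i * y j + 1))| < |y i|) := by
  have hw : ∀ j, 0 < β * y i * y j + 1 := fun j => mul_mul_add_one_pos hβ0.le (hβ i) (hmax j)
  have hw' : ∀ j ∈ G.neighborFinset i, 0 ≤ β * y i * y j + 1 := fun j _ => (hw j).le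
  have hx : ∀ j ∈ G.neighborFinset i, |y j| ≤ |y i| := fun j _ => hmax j
  refine ⟨abs_weightedAverage_le hw' hx, ?_⟩
  rintro ⟨j, hj, hsmaller | hopposite⟩
  · exact abs_weightedAverage_lt hw' hx hj (abs_add_mul_lt_of_abs_lt (hw j) hsmaller)
  · exact abs_weightedAverage_lt hw' hx hj (abs_add_mul_lt_of_mul_neg (hw j) hopposite (hmax j))

/-- BEBA with `w_ii = 1` and `β < 1/[max_j |y_j|]^2` (equivalently
`β < 1/(y j)^2` for every node `j`) on a connected graph: if node `i` achieves
the maximum absolute opinion at time `t`, then `|y_i(t+1)| ≤ |y_i(t)|`, with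
strict inequality if `i` has at least one neighbor with strictly smaller
absolute opinion or any opposite-sign neighbor: the most opinionated node gets
(weakly) moderated. -/
theorem stmt_19 {V : Type*} [Fintype V] (G : SimpleGraph V) [DecidableRel G.Adj]
    (hconn : G.Connected)
    (β : ℝ) (hβ0 : 0 < β)
    (y : V → ℝ) (hy : ∀ j, y j ≠ 0 ∧ |y j| < 1)
    (hβ : ∀ j, β < 1 / (y j) ^ 2)
    (i : V) (hmax : ∀ j, |y j| ≤ |y i|) :
    |(y i + ∑ j ∈ G.neighborFinset i, (β * y i * y j + 1) * y j) /
      (1 + ∑ j ∈ G.neighborFinset i, (β * y i * y j + 1))| ≤ |y i| ∧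
    ((∃ j ∈ G.neighborFinset i, |y j| < |y i| ∨ y i * y j < 0) →
      |(y i + ∑ j ∈ G.neighborFinset i, (β * y i * y j + 1) * y j) /
        (1 + ∑ j ∈ G.neighborFinset i, (β * y i * y j + 1))| < |y i|) :=
  stmt_19_general G β hβ0 y hβ i hmax
end
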